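/- arXiv:2503.04525 — 4 statements merged into one kernel-verified Lean document; each statement's English description precedes it below -/
import Mathlib

section
/- Let A be a DOCA with n states and let w be the length-lexicographically minimal word reaching a configuration 𝔠 = (s, m) from the initial configuration. Then during the run of w, no configuration with counter value greater than m + n² is encountered, and consequently |w| < n·m + n·(n²+1). -/
inductive CAct where
  | add (d : ℤ) : CAct
  | reset : CAct

/-- A deterministic one-counter automaton over alphabet `α`:
states `Fin n`, zero-test transitions, counter updates of magnitude at most 1 or reset. -/
structure DOCA (α : Type) where
  n : ℕ
  ι : Fin n
  F : Finset (Fin n)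
  δ : Fin n → Bool → α → Fin n × CAct
  bounded : ∀ q b a d, (δ q b a).2 = CAct.add d → d.natAbs ≤ 1
  zeroSafe : ∀ q a d, (δ q true a).2 = CAct.add d → 0 ≤ d

namespace DOCA
variable {α : Type}

def step (M : DOCA α) (c : Fin M.n × ℕ) (a : α) : Fin M.n × ℕ :=
  match M.δ c.1 (c.2 == 0) a with
  | (q, CAct.add d) => (q, ((c.2 : ℤ) + d).toNat)
  | (q, CAct.reset) => (q, 0)

/-- The run of a word from a configuration. -/
def run (M : DOCA α) (c : Fin M.n × ℕ) (w : List α) : Fin M.n × ℕ :=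
  w.foldl M.step c

/-- Configuration reached from the initial configuration. -/
def reach (M : DOCA α) (w : List α) : Fin M.n × ℕ :=
  M.run (M.ι, 0) w

def accepts (M : DOCA α) (w : List α) : Prop :=
  (M.reach w).1 ∈ M.F

/-- No reset transition occurs during the run of `w` from `c`. -/
def noResetOn (M : DOCA α) (c : Fin M.n × ℕ) (w : List α) : Prop :=
  ∀ p a, p ++ [a] <+: w →
    (M.δ (M.run c p).1 ((M.run c p).2 == 0) a).2 ≠ CAct.reset

end DOCA

/-- Length-lexicographic (strict) order on words: shorter first,
then lexicographic at equal length. -/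
def llex {α : Type} [LinearOrder α] (u v : List α) : Prop :=
  u.length < v.length ∨ (u.length = v.length ∧
    ∃ (w₁ w₂ w₃ : List α) (a b : α), a < b ∧ u = w₁ ++ a :: w₂ ∧ v = w₁ ++ b :: w₃)

/-!
A length-lexicographically minimal word is in particular a shortest word to its target, so its
run visits no configuration twice. While the counter stays above `D`, zero tests do not notice a
shift of the counter by `D`, so a segment of the run can be replayed `D` lower; in a shortest run
such a replay is never a shortcut.

Let the counter take the value `C` at position `t`. If it falls back to some `L ≥ 1` without a
reset, look at the last visit before `t` and the first visit after `t` of each level in `[L, C)`.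
Two levels `ℓ < ℓ'` in the same pair of states would give a shortcut (replay the run between the
visits of `ℓ'` from the visit of `ℓ`), and the two states of a pair differ, so
`C - L ≤ n² - n`. If instead a reset follows `t`, the counter drops to `n` before it: otherwise
two of the top `n + 1` levels have their last visits before `t` in the same state, and the run
from the higher one through the reset, replayed lower from the other, is a shortcut. Either way
`C ≤ m + n²`, and counting the distinct configurations of the run bounds `|w|`.
-/

section Visits

def IsLastVisit (f : ℕ → ℕ) (t ℓ u : ℕ) : Prop :=
  u ≤ t ∧ f u = ℓ ∧ ∀ j, u < j → j ≤ t → ℓ < f j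

def IsFirstVisit (f : ℕ → ℕ) (t ℓ d : ℕ) : Prop :=
  t ≤ d ∧ f d = ℓ ∧ ∀ j, t ≤ j → j < d → ℓ < f j

variable {f : ℕ → ℕ} {t ℓ ℓ' u u' d d' : ℕ}

theorem exists_isLastVisit (hf : ∀ j, f (j + 1) ≤ f j + 1) (h0 : f 0 ≤ ℓ) :
    ∀ {t}, ℓ ≤ f t → ∃ u, IsLastVisit f t ℓ u
  | 0, ht => ⟨0, le_rfl, by omega, fun _ _ _ => by omega⟩
  | t + 1, ht => by
    rcases ht.eq_or_lt with heq | hlt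
    · exact ⟨t + 1, le_rfl, heq.symm, fun _ _ _ => by omega⟩
    · obtain ⟨u, hut, hu, hgt⟩ := exists_isLastVisit hf h0 (t := t) (by have := hf t; omega)
      refine ⟨u, by omega, hu, fun j huj hjt => ?_⟩
      rcases hjt.eq_or_lt with rfl | hjt
      · exact hlt
      · exact hgt j huj (by omega)

theorem exists_isFirstVisit {e : ℕ} (hte : t ≤ e)
    (hf : ∀ j, t ≤ j → j < e → f j ≤ f (j + 1) + 1) (ht : ℓ ≤ f t) (he : f e ≤ ℓ) :
    ∃ d ≤ e, IsFirstVisit f t ℓ d := by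
  classical
  have hex : ∃ k, f (t + k) ≤ ℓ := ⟨e - t, by rwa [Nat.add_sub_cancel' hte]⟩
  have hk : Nat.find hex ≤ e - t := Nat.find_min' hex (by rwa [Nat.add_sub_cancel' hte])
  have hgt : ∀ j, t ≤ j → j < t + Nat.find hex → ℓ < f j := fun j htj hj => by
    have := Nat.find_min hex (m := j - t) (by omega)
    rw [Nat.add_sub_cancel' htj] at this
    omega
  refine ⟨t + Nat.find hex, by omega, Nat.le_add_right t _, ?_, hgt⟩
  have hle := Nat.find_spec hex
  rcases Nat.eq_zero_or_pos (Nat.find hex) with h0 | hpos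
  · simp only [h0, Nat.add_zero] at hle ⊢
    omega
  · have hprev := hgt (t + Nat.find hex - 1) (by omega) (by omega)
    have hstep := hf (t + Nat.find hex - 1) (by omega) (by omega)
    rw [Nat.sub_add_cancel (by omega)] at hstep
    omega

theorem IsLastVisit.lt (h : IsLastVisit f t ℓ u) (h' : IsLastVisit f t ℓ' u') (hlt : ℓ < ℓ') :
    u < u' := by
  obtain ⟨hut, hu, -⟩ := h
  obtain ⟨-, hu', hgt'⟩ := h'
  by_contra! hle
  rcases hle.eq_or_lt with rfl | hlt'
  · omega
  · have := hgt' u hlt' hut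
    omega

theorem IsFirstVisit.lt (h : IsFirstVisit f t ℓ d) (h' : IsFirstVisit f t ℓ' d') (hlt : ℓ < ℓ') :
    d' < d := by
  obtain ⟨htd, hd, -⟩ := h
  obtain ⟨-, hd', hgt'⟩ := h'
  by_contra! hle
  rcases hle.eq_or_lt with rfl | hlt'
  · omega
  · have := hgt' d htd hlt'
    omega

theorem IsLastVisit.le_apply (h : IsLastVisit f t ℓ u) {k : ℕ} (huk : u ≤ k) (hkt : k ≤ t) :
    ℓ ≤ f k := by
  obtain ⟨-, hu, hgt⟩ := h
  rcases huk.eq_or_lt with rfl | huk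
  · exact hu.ge
  · exact (hgt k huk hkt).le

theorem IsFirstVisit.le_apply (h : IsFirstVisit f t ℓ d) {k : ℕ} (htk : t ≤ k) (hkd : k ≤ d) :
    ℓ ≤ f k := by
  obtain ⟨-, hd, hgt⟩ := h
  rcases hkd.eq_or_lt with rfl | hkd
  · exact hd.ge
  · exact (hgt k htk hkd).le

end Visits

theorem exists_lt_map_eq_of_card_lt {β : Type*} {g : ℕ → β} {T : Finset β} {a b : ℕ}
    (hcard : T.card < b - a) (hg : ∀ ℓ ∈ Finset.Ico a b, g ℓ ∈ T) :
    ∃ ℓ ℓ', a ≤ ℓ ∧ ℓ < ℓ' ∧ ℓ' < b ∧ g ℓ = g ℓ' := by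
  obtain ⟨x, hx, y, hy, hne, hxy⟩ :=
    Finset.exists_ne_map_eq_of_card_lt_of_maps_to (by rwa [Nat.card_Ico]) hg
  rw [Finset.mem_Ico] at hx hy
  rcases Nat.lt_or_gt_of_ne hne with h | h
  · exact ⟨x, y, hx.1, h, hy.2, hxy⟩
  · exact ⟨y, x, hy.1, h, hx.2, hxy.symm⟩

namespace DOCA

variable {α : Type} (M : DOCA α)

theorem step_snd_le (c : Fin M.n × ℕ) (a : α) : (M.step c a).2 ≤ c.2 + 1 := by
  unfold step
  split
  · next d h =>
    have := M.bounded _ _ _ d (by rw [h])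
    simp only
    omega
  · simp

theorem le_step_snd_add_one (c : Fin M.n × ℕ) (a : α)
    (h : (M.δ c.1 (c.2 == 0) a).2 ≠ CAct.reset) : c.2 ≤ (M.step c a).2 + 1 := by
  unfold step
  split
  · next d hδ =>
    have := M.bounded _ _ _ d (by rw [hδ])
    simp only
    omega
  · next hδ => simp [hδ] at h

theorem step_snd_eq_zero (c : Fin M.n × ℕ) (a : α)
    (h : (M.δ c.1 (c.2 == 0) a).2 = CAct.reset) : (M.step c a).2 = 0 := by
  unfold step
  split
  · next hδ => simp [hδ] at h
  · rfl

theorem step_sub {c : Fin M.n × ℕ} {D : ℕ} (hD : D < c.2) (a : α) :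
    M.step (c.1, c.2 - D) a = ((M.step c a).1, (M.step c a).2 - D) := by
  have hflag : (c.2 - D == 0) = (c.2 == 0) := by
    simp only [beq_eq_beq]
    omega
  unfold step
  simp only [hflag]
  split
  · simp only [Prod.mk.injEq, true_and]
    omega
  · simp

theorem run_sub {c : Fin M.n × ℕ} {D : ℕ} {u : List α}
    (hD : ∀ k < u.length, D < (M.run c (u.take k)).2) :
    M.run (c.1, c.2 - D) u = ((M.run c u).1, (M.run c u).2 - D) := by
  induction u generalizing c with
  | nil => rfl
  | cons a u ih =>
    change M.run (M.step (c.1, c.2 - D) a) u = ((M.run (M.step c a) u).1, _)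
    rw [M.step_sub (c := c) (hD 0 (by simp))]
    exact ih fun k hk => hD (k + 1) (by simpa using hk)

theorem run_append (c : Fin M.n × ℕ) (u v : List α) :
    M.run c (u ++ v) = M.run (M.run c u) v :=
  List.foldl_append

def configAt (w : List α) (i : ℕ) : Fin M.n × ℕ :=
  M.reach (w.take i)

theorem run_configAt_take_drop (w : List α) (i k : ℕ) :
    M.run (M.configAt w i) ((w.drop i).take k) = M.configAt w (i + k) := by
  rw [configAt, configAt, reach, reach, List.take_add, run_append]

theorem run_configAt_drop (w : List α) (i : ℕ) :
    M.run (M.configAt w i) (w.drop i) = M.reach w := by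
  rw [configAt, reach, reach, ← run_append, List.take_append_drop]

theorem configAt_length (w : List α) : M.configAt w w.length = M.reach w := by
  rw [configAt, List.take_length]

theorem configAt_succ {w : List α} {i : ℕ} (h : i < w.length) :
    M.configAt w (i + 1) = M.step (M.configAt w i) w[i] := by
  rw [← run_configAt_take_drop, List.drop_eq_getElem_cons h]
  rfl

def counterAt (w : List α) (i : ℕ) : ℕ :=
  (M.configAt w i).2

theorem counterAt_succ_le (w : List α) (i : ℕ) :
    M.counterAt w (i + 1) ≤ M.counterAt w i + 1 := by
  rw [counterAt, ← run_configAt_take_drop]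
  cases w.drop i with
  | nil => simp [run, counterAt]
  | cons a v => exact M.step_snd_le _ a

def ResetsAt (w : List α) (j : ℕ) : Prop :=
  ∃ h : j < w.length, (M.δ (M.configAt w j).1 ((M.configAt w j).2 == 0) w[j]).2 = CAct.reset

theorem le_counterAt_succ {w : List α} {j : ℕ} (hj : j < w.length) (h : ¬ M.ResetsAt w j) :
    M.counterAt w j ≤ M.counterAt w (j + 1) + 1 := by
  rw [counterAt, counterAt, M.configAt_succ hj]
  exact M.le_step_snd_add_one _ _ fun hr => h ⟨hj, hr⟩

theorem ResetsAt.counterAt_succ {M : DOCA α} {w : List α} {j : ℕ} (h : M.ResetsAt w j) :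
    M.counterAt w (j + 1) = 0 := by
  obtain ⟨hj, hr⟩ := h
  rw [counterAt, M.configAt_succ hj]
  exact M.step_snd_eq_zero _ _ hr

def IsShortest (w : List α) : Prop :=
  ∀ v, M.reach v = M.reach w → w.length ≤ v.length

variable {M} {w : List α}

theorem IsShortest.le_add_length (hw : M.IsShortest w) {i j : ℕ} {u : List α}
    (hj : j ≤ w.length) (h : M.run (M.configAt w i) u = M.configAt w j) :
    j ≤ i + u.length := by
  have hv : M.reach (w.take i ++ u ++ w.drop j) = M.reach w := by
    rw [reach, run_append, run_append]
    change M.run (M.run (M.configAt w i) u) (w.drop j) = _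
    rw [h, run_configAt_drop]
  have := hw _ hv
  simp only [List.length_append, List.length_take, List.length_drop] at this
  omega

theorem IsShortest.injOn_configAt (hw : M.IsShortest w) :
    Set.InjOn (M.configAt w) (Set.Iic w.length) := by
  intro i hi j hj hij
  have hji := hw.le_add_length (u := []) hj hij
  have hij := hw.le_add_length (u := []) hi hij.symm
  simp only [List.length_nil, add_zero] at hji hij
  omega

theorem IsShortest.configAt_fst_ne (hw : M.IsShortest w) {i j : ℕ} (hij : i < j)
    (hj : j ≤ w.length) (hc : M.counterAt w i = M.counterAt w j) :
    (M.configAt w i).1 ≠ (M.configAt w j).1 := fun hs =>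
  hij.ne (hw.injOn_configAt (Set.mem_Iic.2 (by omega)) hj (Prod.ext hs hc))

/-- Replaying the segment `[i', j')` of `w` lowered by `D`, from position `i`, is no shortcut to
position `j`. -/
theorem IsShortest.sub_le_sub_of_shift (hw : M.IsShortest w) {i i' j' j D : ℕ}
    (hj : j ≤ w.length) (hij' : i' ≤ j')
    (hstate_start : (M.configAt w i).1 = (M.configAt w i').1)
    (hcounter_start : M.counterAt w i = M.counterAt w i' - D)
    (hD : ∀ k, i' ≤ k → k < j' → D < M.counterAt w k)
    (hstate_end : (M.configAt w j).1 = (M.configAt w j').1)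
    (hcounter_end : M.counterAt w j = M.counterAt w j' - D) :
    j - i ≤ j' - i' := by
  have hstart : M.configAt w i = ((M.configAt w i').1, (M.configAt w i').2 - D) :=
    Prod.ext hstate_start hcounter_start
  have hend : M.configAt w j = ((M.configAt w j').1, (M.configAt w j').2 - D) :=
    Prod.ext hstate_end hcounter_end
  have hrun : M.run (M.configAt w i) (w.extract i' j') = M.configAt w j := by
    rw [hstart, M.run_sub, List.extract, run_configAt_take_drop, Nat.add_sub_cancel' hij', hend]
    intro k hk
    have hk' : k < j' - i' := hk.trans_le (List.length_take_le _ _)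
    rw [List.extract, List.take_take, min_eq_left hk'.le, run_configAt_take_drop]
    exact hD _ (by omega) (by omega)
  have := hw.le_add_length hj hrun
  have := List.length_take_le (j' - i') (w.drop i')
  simp only [List.extract] at *
  omega

theorem IsShortest.exists_counterAt_le_of_resetsAt (hw : M.IsShortest w) {t b : ℕ}
    (htb : t ≤ b) (hb : M.ResetsAt w b) :
    ∃ j, t ≤ j ∧ j ≤ b ∧ M.counterAt w j ≤ M.n := by
  by_contra! hbig
  have hC := hbig t le_rfl htb
  choose! up hup using fun ℓ (hℓ : ℓ ≤ M.counterAt w t) =>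
    exists_isLastVisit (M.counterAt_succ_le w) (Nat.zero_le ℓ) hℓ
  obtain ⟨ℓ, ℓ', hℓ, hlt, hℓ', hstate⟩ := exists_lt_map_eq_of_card_lt
    (g := fun ℓ => (M.configAt w (up ℓ)).1) (T := Finset.univ)
    (a := M.counterAt w t - M.n) (b := M.counterAt w t + 1)
    (by simp only [Finset.card_univ, Fintype.card_fin]; omega) (fun _ _ => Finset.mem_univ _)
  have hup_lt := (hup ℓ (by omega)).lt (hup ℓ' (by omega)) hlt
  obtain ⟨-, hu_eq, -⟩ := hup ℓ (by omega)
  obtain ⟨hu_le', hu_eq', -⟩ := hup ℓ' (by omega)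
  have := hw.sub_le_sub_of_shift (D := ℓ' - ℓ) hb.1 (by omega) hstate (by omega)
    (fun k hk hkb => ?_) rfl (by rw [hb.counterAt_succ, Nat.zero_sub])
  · omega
  · rcases le_or_gt k t with hkt | hkt
    · have := (hup ℓ' (by omega)).le_apply hk hkt
      omega
    · have := hbig k hkt.le (by omega)
      omega

theorem IsShortest.counterAt_add_le (hw : M.IsShortest w) {t e L : ℕ} (hte : t ≤ e)
    (he : e ≤ w.length) (hnr : ∀ j, t ≤ j → j < e → ¬ M.ResetsAt w j) (hL : 1 ≤ L)
    (heL : M.counterAt w e ≤ L) :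
    M.counterAt w t + M.n ≤ L + M.n ^ 2 := by
  by_contra! hbig
  have hn : M.n ≤ M.n ^ 2 := Nat.le_self_pow two_ne_zero _
  choose! up hup using fun ℓ (hℓ : ℓ ≤ M.counterAt w t) =>
    exists_isLastVisit (M.counterAt_succ_le w) (Nat.zero_le ℓ) hℓ
  choose! down hdown_le hdown using fun ℓ (hLℓ : L ≤ ℓ) (hℓ : ℓ ≤ M.counterAt w t) =>
    exists_isFirstVisit (f := M.counterAt w) hte
      (fun j htj hje => M.le_counterAt_succ (by omega) (hnr j htj hje)) hℓ (heL.trans hLℓ)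
  have hoff : ∀ ℓ ∈ Finset.Ico L (M.counterAt w t),
      ((M.configAt w (up ℓ)).1, (M.configAt w (down ℓ)).1) ∈ Finset.univ.offDiag := by
    intro ℓ hℓ
    rw [Finset.mem_Ico] at hℓ
    obtain ⟨hu_le, hu_eq, -⟩ := hup ℓ hℓ.2.le
    obtain ⟨hd_ge, hd_eq, -⟩ := hdown ℓ hℓ.1 hℓ.2.le
    have hut : up ℓ ≠ t := by rintro rfl; omega
    simpa using hw.configAt_fst_ne (by omega : up ℓ < down ℓ)
      ((hdown_le ℓ hℓ.1 hℓ.2.le).trans he) (hu_eq.trans hd_eq.symm)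
  obtain ⟨ℓ, ℓ', hℓ, hlt, hℓ', hpair⟩ := exists_lt_map_eq_of_card_lt (by
    rw [Finset.offDiag_card, Finset.card_univ, Fintype.card_fin, ← sq]; omega) hoff
  obtain ⟨hsu, hsd⟩ := Prod.mk.inj hpair
  have hup_lt := (hup ℓ (by omega)).lt (hup ℓ' (by omega)) hlt
  have hdown_lt := (hdown ℓ hℓ (by omega)).lt (hdown ℓ' (by omega) (by omega)) hlt
  have := hdown_le ℓ hℓ (by omega)
  obtain ⟨-, hu_eq, -⟩ := hup ℓ (by omega)
  obtain ⟨hu_le', hu_eq', -⟩ := hup ℓ' (by omega)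
  obtain ⟨-, hd_eq, -⟩ := hdown ℓ hℓ (by omega)
  obtain ⟨hd_ge', hd_eq', -⟩ := hdown ℓ' (by omega) (by omega)
  have := hw.sub_le_sub_of_shift (D := ℓ' - ℓ) (by omega) (by omega) hsu (by omega)
    (fun k hk hkd => ?_) hsd (by omega)
  · omega
  · rcases le_or_gt k t with hkt | hkt
    · have := (hup ℓ' (by omega)).le_apply hk hkt
      omega
    · have := (hdown ℓ' (by omega) (by omega)).le_apply hkt.le hkd.le
      omega

theorem IsShortest.counterAt_le (hw : M.IsShortest w) {i : ℕ} (hi : i ≤ w.length) :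
    M.counterAt w i ≤ (M.reach w).2 + M.n ^ 2 := by
  classical
  have hn : 1 ≤ M.n := M.ι.pos
  by_cases hreset : ∃ b, i ≤ b ∧ M.ResetsAt w b
  · obtain ⟨hib, hb⟩ := Nat.find_spec hreset
    obtain ⟨j, hij, hjb, hj⟩ := hw.exists_counterAt_le_of_resetsAt hib hb
    have := hw.counterAt_add_le hij (hjb.trans hb.1.le)
      (fun k hik hkj hk => Nat.find_min hreset (by omega) ⟨hik, hk⟩) hn hj
    omega
  · have := hw.counterAt_add_le hi le_rfl (fun j hij _ hj => hreset ⟨j, hij, hj⟩)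
      (le_max_right _ 1) (by rw [counterAt, configAt_length]; exact le_max_left _ _)
    omega

theorem IsShortest.reach_snd_le_of_prefix (hw : M.IsShortest w) {u : List α} (hu : u <+: w) :
    (M.reach u).2 ≤ (M.reach w).2 + M.n ^ 2 := by
  rw [List.prefix_iff_eq_take.mp hu]
  exact hw.counterAt_le hu.length_le

theorem IsShortest.length_lt (hw : M.IsShortest w) :
    w.length < M.n * ((M.reach w).2 + M.n ^ 2 + 1) := by
  have := Finset.card_le_card_of_injOn (s := Finset.Iic w.length)
    (t := (Finset.univ : Finset (Fin M.n)) ×ˢ Finset.range ((M.reach w).2 + M.n ^ 2 + 1))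
    (M.configAt w)
    (fun i hi => Finset.mem_product.2 ⟨Finset.mem_univ _,
      Finset.mem_range.2 (Nat.lt_succ_of_le (hw.counterAt_le (by simpa using hi)))⟩)
    (by rw [Finset.coe_Iic]; exact hw.injOn_configAt)
  rwa [Nat.card_Iic, Finset.card_product, Finset.card_univ, Fintype.card_fin,
    Finset.card_range] at this

end DOCA

theorem llex.length_le {α : Type} [LinearOrder α] {u v : List α} (h : llex u v) :
    u.length ≤ v.length := by
  rcases h with h | ⟨h, -⟩ <;> omega

theorem lexmin_counter_bound_general (α : Type) [LinearOrder α]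
    (M : DOCA α) (w : List α) (s : Fin M.n) (m : ℕ)
    (hreach : M.reach w = (s, m))
    (hmin : ∀ v, M.reach v = (s, m) → v = w ∨ llex w v) :
    (∀ u, u <+: w → (M.reach u).2 ≤ m + M.n ^ 2) ∧
      w.length < M.n * m + M.n * (M.n ^ 2 + 1) := by
  have hw : M.IsShortest w := fun v hv => by
    rcases hmin v (hv.trans hreach) with rfl | h
    · exact le_rfl
    · exact h.length_le
  refine ⟨fun u hu => by simpa [hreach] using hw.reach_snd_le_of_prefix hu, ?_⟩
  calc w.length < M.n * (m + M.n ^ 2 + 1) := by simpa [hreach] using hw.length_lt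
    _ = M.n * m + M.n * (M.n ^ 2 + 1) := by ring

theorem lexmin_counter_bound (α : Type) [Fintype α] [LinearOrder α]
    (M : DOCA α) (w : List α) (s : Fin M.n) (m : ℕ)
    (hreach : M.reach w = (s, m))
    (hmin : ∀ v, M.reach v = (s, m) → v = w ∨ llex w v) :
    (∀ u, u <+: w → (M.reach u).2 ≤ m + M.n ^ 2) ∧
      w.length < M.n * m + M.n * (M.n ^ 2 + 1) :=
  lexmin_counter_bound_general α M w s m hreach hmin
end

section
/- Let A be a DFA, D a DOCA with n states, and suppose for states p_{-2n}, …, p_{l+2n} of A there is a configuration 𝔠 of D and d ≥ 1 with: for each i ∈ [-2n, l+2n] there is a word u_i with A(u_i) = p_i and D(u_i) = 𝔠 + i·d (the sequence is d-winning). If w is a word of length at most n·d such that the run of w in D from 𝔠 involves no reset transition and |𝔠 + i·d| > n·d for all i, then the sequence (A(p_{-2n}, w), …, A(p_{l+2n}, w)) obtained by reading w from each p_i is d-winning, witnessed by the configuration reached by w from 𝔠. -/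
/-! A run that never resets and starts with counter above its length never reaches zero, so
no zero test fires and each step adds the same increment at every counter height. Reading `w`
therefore commutes with shifting the counter by `i * d`, and appending `w` to the witness `u_i`
of `p_i ⋈ 𝔠 + i·d` witnesses `A(p_i, w) ⋈ D(𝔠, w) + i·d`. -/

namespace DOCA

variable {α : Type} (M : DOCA α)

/-- The configuration `𝔠 + t` of the paper. -/
def shift (c : Fin M.n × ℕ) (t : ℤ) : Fin M.n × ℕ :=
  (c.1, ((c.2 : ℤ) + t).toNat)

variable {M}

theorem step_of_add {c : Fin M.n × ℕ} {a : α} {q : Fin M.n} {e : ℤ}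
    (h : M.δ c.1 (c.2 == 0) a = (q, CAct.add e)) :
    M.step c a = (q, ((c.2 : ℤ) + e).toNat) := by
  simp [step, h]

theorem noResetOn.cons {c : Fin M.n × ℕ} {a : α} {w : List α}
    (h : M.noResetOn c (a :: w)) :
    (M.δ c.1 (c.2 == 0) a).2 ≠ CAct.reset ∧ M.noResetOn (M.step c a) w := by
  refine ⟨by simpa [run] using h [] a (by simp), fun p b hp => ?_⟩
  simpa [run] using h (a :: p) b (by simpa using hp)

theorem counter_sub_one_le_step {c : Fin M.n × ℕ} {a : α}
    (h : (M.δ c.1 (c.2 == 0) a).2 ≠ CAct.reset) :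
    (c.2 : ℤ) - 1 ≤ (M.step c a).2 := by
  rcases hs : M.δ c.1 (c.2 == 0) a with ⟨q, e | _⟩
  · have := M.bounded _ _ _ e (by rw [hs])
    rw [step_of_add hs]
    omega
  · simp [hs] at h

theorem step_shift {c : Fin M.n × ℕ} {a : α} {t : ℤ} (hc : 0 < c.2) (hct : 0 < (c.2 : ℤ) + t)
    (h : (M.δ c.1 (c.2 == 0) a).2 ≠ CAct.reset) :
    M.step (M.shift c t) a = M.shift (M.step c a) t := by
  have hzero : (c.2 == 0) = false := by simpa using hc.ne'
  have hzero_shift : ((M.shift c t).2 == 0) = false := by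
    simp only [shift, beq_eq_false_iff_ne]; omega
  rcases hs : M.δ c.1 false a with ⟨q, e | _⟩
  · have := M.bounded _ _ _ e (by rw [hs])
    rw [step_of_add (by rw [hzero_shift]; exact hs), step_of_add (by rw [hzero]; exact hs)]
    simp only [shift, Prod.mk.injEq, true_and]
    omega
  · simp [hzero, hs] at h

theorem counter_sub_length_le_run {c : Fin M.n × ℕ} {w : List α} (h : M.noResetOn c w) :
    (c.2 : ℤ) - w.length ≤ (M.run c w).2 := by
  induction w generalizing c with
  | nil => simp [run]
  | cons a w ih =>
    obtain ⟨hhead, htail⟩ := h.cons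
    have := counter_sub_one_le_step hhead
    have := ih htail
    simp only [run, List.foldl_cons, List.length_cons] at this ⊢
    omega

theorem run_shift {c : Fin M.n × ℕ} {w : List α} {t : ℤ} (h : M.noResetOn c w)
    (hc : w.length < c.2) (hct : (w.length : ℤ) < c.2 + t) :
    M.run (M.shift c t) w = M.shift (M.run c w) t := by
  induction w generalizing c with
  | nil => rfl
  | cons a w ih =>
    obtain ⟨hhead, htail⟩ := h.cons
    have := counter_sub_one_le_step hhead
    simp only [List.length_cons] at hc hct
    have hstep := step_shift (t := t) (by omega) (by omega) hhead
    simp only [run, List.foldl_cons] at ih ⊢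
    rw [hstep]
    exact ih htail (by omega) (by omega)

theorem reach_append (u w : List α) : M.reach (u ++ w) = M.run (M.reach u) w :=
  List.foldl_append

end DOCA

theorem dwinning_preserved_general (α : Type) (M : DOCA α) (s : ℕ) (A : DFA α (Fin s))
    (l : ℕ) (p : ℤ → Fin s) (c : Fin M.n × ℕ) (d : ℕ)
    (hwin : ∀ i : ℤ, -(2 * M.n : ℤ) ≤ i → i ≤ (l : ℤ) + 2 * M.n →
      ∃ u : List α, A.eval u = p i ∧ 0 ≤ (c.2 : ℤ) + i * d ∧
        M.reach u = (c.1, ((c.2 : ℤ) + i * d).toNat))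
    (w : List α) (hw : w.length ≤ M.n * d)
    (hnoreset : M.noResetOn c w)
    (hhigh : ∀ i : ℤ, -(2 * M.n : ℤ) ≤ i → i ≤ (l : ℤ) + 2 * M.n →
      (M.n * d : ℤ) < (c.2 : ℤ) + i * d) :
    ∀ i : ℤ, -(2 * M.n : ℤ) ≤ i → i ≤ (l : ℤ) + 2 * M.n →
      ∃ u : List α, A.eval u = A.evalFrom (p i) w ∧
        0 ≤ ((M.run c w).2 : ℤ) + i * d ∧
        M.reach u = ((M.run c w).1, (((M.run c w).2 : ℤ) + i * d).toNat) := by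
  intro i hlo hhi
  obtain ⟨u, hu, -, hreach⟩ := hwin i hlo hhi
  have hw : (w.length : ℤ) ≤ M.n * d := by exact_mod_cast hw
  have hc : (M.n * d : ℤ) < c.2 := by simpa using hhigh 0 (by omega) (by omega)
  have hci := hhigh i hlo hhi
  have hlow := DOCA.counter_sub_length_le_run hnoreset
  refine ⟨u ++ w, ?_, by omega, ?_⟩
  · rw [← hu]
    exact A.evalFrom_of_append _ _ _
  · rw [DOCA.reach_append, hreach]
    exact DOCA.run_shift hnoreset (by omega) (by omega)

theorem dwinning_preserved (α : Type) (M : DOCA α) (s : ℕ) (A : DFA α (Fin s))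
    (l : ℕ) (p : ℤ → Fin s) (c : Fin M.n × ℕ) (d : ℕ) (hd : 1 ≤ d)
    (hwin : ∀ i : ℤ, -(2 * M.n : ℤ) ≤ i → i ≤ (l : ℤ) + 2 * M.n →
      ∃ u : List α, A.eval u = p i ∧ 0 ≤ (c.2 : ℤ) + i * d ∧
        M.reach u = (c.1, ((c.2 : ℤ) + i * d).toNat))
    (w : List α) (hw : w.length ≤ M.n * d)
    (hnoreset : M.noResetOn c w)
    (hhigh : ∀ i : ℤ, -(2 * M.n : ℤ) ≤ i → i ≤ (l : ℤ) + 2 * M.n →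
      (M.n * d : ℤ) < (c.2 : ℤ) + i * d) :
    ∀ i : ℤ, -(2 * M.n : ℤ) ≤ i → i ≤ (l : ℤ) + 2 * M.n →
      ∃ u : List α, A.eval u = A.evalFrom (p i) w ∧
        0 ≤ ((M.run c w).2 : ℤ) + i * d ∧
        M.reach u = ((M.run c w).1, (((M.run c w).2 : ℤ) + i * d).toNat) :=
  dwinning_preserved_general α M s A l p c d hwin w hw hnoreset hhigh
end

section
/- Let D be a DOCA with n states, p a state of its P2(n)-behavioural DFA A with |lexmin(p)| = P1(n) (a border state), 𝔠 = D(lexmin(p)) the configuration reached in D by reading lexmin(p). Then lexmin over words reaching 𝔠 in D equals lexmin(p), i.e., the length-lexicographically minimal word reaching the DFA state p also is the minimal word reaching the DOCA configuration 𝔠. -/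
theorem lexmin_state_config_general (α : Type) [LinearOrder α]
    (M : DOCA α) (P2 : ℕ) (hP : 3 * (M.n + 1) ^ 4 < P2)
    (s : ℕ) (A : DFA α (Fin s)) (p : Fin s) (w : List α)
    (hkey : ∀ u v : List α, u.length ≤ P2 → v.length ≤ P2 →
      M.reach u = M.reach v → A.eval u = A.eval v)
    (heval : A.eval w = p)
    (hminp : ∀ v, A.eval v = p → v = w ∨ llex w v)
    (hlen : w.length = 3 * (M.n + 1) ^ 4) :
    ∀ v, M.reach v = M.reach w → v = w ∨ llex w v := by
  intro v hv
  by_cases hv_short : v.length ≤ P2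
  · have hw_short : w.length ≤ P2 := by omega
    exact hminp v (heval ▸ hkey v w hv_short hw_short hv)
  · exact Or.inr (Or.inl (by omega))

theorem lexmin_state_config (α : Type) [Fintype α] [LinearOrder α]
    (M : DOCA α) (P2 : ℕ) (hP : 3 * (M.n + 1) ^ 4 < P2)
    (s : ℕ) (A : DFA α (Fin s)) (p : Fin s) (w : List α)
    (hkey : ∀ u v : List α, u.length ≤ P2 → v.length ≤ P2 →
      M.reach u = M.reach v → A.eval u = A.eval v)
    (heval : A.eval w = p)
    (hminp : ∀ v, A.eval v = p → v = w ∨ llex w v)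
    (hlen : w.length = 3 * (M.n + 1) ^ 4)
    (hbound : ∀ v, M.reach v = M.reach w →
      (∀ v', M.reach v' = M.reach w → v' = v ∨ llex v v') → v.length ≤ P2) :
    ∀ v, M.reach v = M.reach w → v = w ∨ llex w v :=
  lexmin_state_config_general α M P2 hP s A p w hkey heval hminp hlen
end

section
/- Every m-DOCA B with k states can be converted into an equivalent 1-DOCA (standard DOCA) with at most k·m states, where counter updates have magnitude at most 1 and only zero tests are allowed. -/
/-- An m-DOCA: can test counter values 0,…,m−1 (and "≥ m"), and change the
counter by up to m in magnitude, or reset it to zero. -/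
structure MDOCA (α : Type) (m : ℕ) where
  n : ℕ
  ι : Fin n
  F : Finset (Fin n)
  δ : Fin n → ℕ → α → Fin n × CAct
  bounded : ∀ q t a d, (δ q t a).2 = CAct.add d → d.natAbs ≤ m

def MDOCA.step {α : Type} {m : ℕ} (M : MDOCA α m) (c : Fin M.n × ℕ) (a : α) :
    Fin M.n × ℕ :=
  match M.δ c.1 (min c.2 m) a with
  | (q, CAct.add d) => (q, ((c.2 : ℤ) + d).toNat)
  | (q, CAct.reset) => (q, 0)

def MDOCA.accepts {α : Type} {m : ℕ} (M : MDOCA α m) (w : List α) : Prop :=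
  (w.foldl M.step (M.ι, 0)).1 ∈ M.F


/-!
The 1-DOCA keeps the counter value `v` of the m-DOCA as `v / m` on its counter and `v % m` in
its state. Whether `v < m` is exactly whether the 1-DOCA's counter is zero, and then `v` itself is
in the state, so every test of the m-DOCA can be answered. An update by `d` with `|d| ≤ m` changes
`v % m + d` to a value in `[-m, 2m)`, so the carry into `v / m` is `-1`, `0` or `1`.
-/

namespace MDOCA

variable {α : Type} {m : ℕ}

/-- The low part `r` of the counter plus `d`, before the carry is split off. When the high part is
zero, `r` is the whole counter and the truncation at `0` of the m-DOCA happens here; otherwise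
`r + d ≥ -m` cannot make the whole counter negative. -/
def lowSum (isZero : Bool) (r : ℕ) (d : ℤ) : ℤ :=
  if isZero then max (r + d) 0 else r + d

lemma lowSum_ediv_natAbs_le_one {r : ℕ} {d : ℤ} (hr : r < m) (hd : d.natAbs ≤ m) (b : Bool) :
    (lowSum b r d / m).natAbs ≤ 1 := by
  have hm : (0 : ℤ) < m := by omega
  have lower : -1 ≤ lowSum b r d / m :=
    (Int.le_ediv_iff_mul_le hm).mpr (by unfold lowSum; split <;> omega)
  have upper : lowSum b r d / m < 2 :=
    (Int.ediv_lt_iff_lt_mul hm).mpr (by unfold lowSum; split <;> omega)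
  omega

lemma lowSum_true_ediv_nonneg (r : ℕ) (d : ℤ) : 0 ≤ lowSum true r d / m :=
  Int.ediv_nonneg (le_max_right _ _) (Int.natCast_nonneg m)

lemma toNat_add_eq_lowSum {v : ℕ} {d : ℤ} (hd : -(m : ℤ) ≤ d) :
    ((((v : ℤ) + d).toNat : ℕ) : ℤ) = lowSum (v / m == 0) (v % m) d + m * (v / m : ℕ) := by
  have hv : (v : ℤ) = (v % m : ℕ) + m * (v / m : ℕ) := by exact_mod_cast (Nat.mod_add_div v m).symm
  rcases Nat.eq_zero_or_pos (v / m) with h | h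
  · simp only [h, beq_self_eq_true, lowSum, if_true] at hv ⊢
    omega
  · have : (v / m == 0) = false := by simpa using h.ne'
    simp only [this, lowSum, Bool.false_eq_true, if_false]
    have : (m : ℤ) ≤ m * (v / m : ℕ) := le_mul_of_one_le_right (by omega) (by exact_mod_cast h)
    omega

lemma ite_div_eq_zero_eq_min [NeZero m] (v : ℕ) :
    (if (v / m == 0) = true then v % m else m) = min v m := by
  rcases Nat.lt_or_ge v m with h | h
  · simp [Nat.div_eq_of_lt h, Nat.mod_eq_of_lt h, h.le]
  · simp [Nat.div_eq_zero_iff, h, NeZero.ne m]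

variable [NeZero m]

/-- `r` is the low part of the counter stored in the state, `b` the zero test of the 1-DOCA. -/
def scaledAction {n : ℕ} (r : ℕ) (b : Bool) : Fin n × CAct → Fin (n * m) × CAct
  | (q', .reset) => (finProdFinEquiv (q', 0), .reset)
  | (q', .add d) =>
      (finProdFinEquiv (q', Fin.ofNat m (lowSum b r d % m).toNat), .add (lowSum b r d / m))

lemma scaledAction_natAbs_le_one {n r : ℕ} (hr : r < m) (b : Bool) {out : Fin n × CAct}
    (hout : ∀ d, out.2 = .add d → d.natAbs ≤ m) {d : ℤ}
    (h : (scaledAction (m := m) r b out).2 = .add d) : d.natAbs ≤ 1 := by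
  obtain ⟨q', d' | _⟩ := out <;> cases h
  exact lowSum_ediv_natAbs_le_one hr (hout d' rfl) b

lemma scaledAction_true_nonneg {n r : ℕ} {out : Fin n × CAct} {d : ℤ}
    (h : (scaledAction (m := m) r true out).2 = .add d) : 0 ≤ d := by
  obtain ⟨q', d' | _⟩ := out <;> cases h
  exact lowSum_true_ediv_nonneg r d'

variable (B : MDOCA α m)

def toDOCA : DOCA α where
  n := B.n * m
  ι := finProdFinEquiv (B.ι, 0)
  F := Finset.univ.filter fun s => (finProdFinEquiv.symm s).1 ∈ B.F
  δ s b a :=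
    let p := finProdFinEquiv.symm s
    scaledAction p.2 b (B.δ p.1 (if b then p.2 else m) a)
  bounded s b a _ :=
    scaledAction_natAbs_le_one (finProdFinEquiv.symm s).2.isLt b (B.bounded _ _ a)
  zeroSafe _ _ _ := scaledAction_true_nonneg

lemma mem_toDOCA_F {s : Fin (B.n * m)} : s ∈ B.toDOCA.F ↔ (finProdFinEquiv.symm s).1 ∈ B.F :=
  Finset.mem_filter.trans (and_iff_right (Finset.mem_univ s))

def encode (c : Fin B.n × ℕ) : Fin (B.n * m) × ℕ :=
  (finProdFinEquiv (c.1, Fin.ofNat m c.2), c.2 / m)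

lemma toDOCA_step_encode (c : Fin B.n × ℕ) (a : α) :
    B.toDOCA.step (B.encode c) a = B.encode (B.step c a) := by
  obtain ⟨q, v⟩ := c
  simp only [DOCA.step, toDOCA, encode, Equiv.symm_apply_apply, Fin.val_ofNat, MDOCA.step]
  rw [ite_div_eq_zero_eq_min]
  rcases hδ : B.δ q (min v m) a with ⟨q', d | _⟩ <;> simp only [scaledAction]
  · have hd : d.natAbs ≤ m := B.bounded _ _ _ _ (by rw [hδ])
    have key := toNat_add_eq_lowSum (v := v) (show -(m : ℤ) ≤ d by omega)
    set y := lowSum (v / m == 0) (v % m) d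
    have hmod : (y % m).toNat = ((v : ℤ) + d).toNat % m := by
      rw [← Int.toNat_natCast (_ % m), Int.natCast_mod, key, Int.add_mul_emod_self_left]
    have hdiv : ((v / m : ℕ) : ℤ) + y / m = (((v : ℤ) + d).toNat / m : ℕ) := by
      rw [Int.natCast_div ((v : ℤ) + d).toNat, key,
        Int.add_mul_ediv_left _ _ (by exact_mod_cast NeZero.ne m), add_comm]
    rw [hmod, hdiv, Int.toNat_natCast]
    simp only [Fin.ofNat, Nat.mod_mod]
  · simp

lemma toDOCA_reach (w : List α) : B.toDOCA.reach w = B.encode (w.foldl B.step (B.ι, 0)) := by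
  have hinit : (B.toDOCA.ι, 0) = B.encode (B.ι, 0) := by simp [toDOCA, encode]
  rw [DOCA.reach, DOCA.run, hinit]
  exact List.foldl_hom B.encode (B.toDOCA_step_encode · ·)

end MDOCA

theorem mdoca_to_doca (α : Type) (m : ℕ) (hm : 1 ≤ m) (B : MDOCA α m) :
    ∃ C : DOCA α, C.n ≤ B.n * m ∧ ∀ w, C.accepts w ↔ B.accepts w := by
  have : NeZero m := ⟨by omega⟩
  refine ⟨B.toDOCA, le_rfl, fun w => ?_⟩
  rw [DOCA.accepts, MDOCA.accepts, B.toDOCA_reach]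
  exact B.mem_toDOCA_F.trans (by rw [MDOCA.encode, Equiv.symm_apply_apply])
end
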